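/- Let n be a smooth solution of the liquid-crystal variational wave system and R = n_t + c n_x, S = n_t − c n_x. Then the total energy density satisfies the conservation law ∂_t(|R|² + |S|²) − ∂_x(c(n₁)(|R|² − |S|²)) = 0 pointwise. -/

import Mathlib

/-! Write q = c²(n₁). On the sphere q = α + (γ - α) n₁² = Σᵢ ζᵢ nᵢ², and in these terms
|R|² + |S|² = 2 (|n_t|² + q |n_x|²) and c (|R|² - |S|²) = 4 q n_t·n_x. Differentiating, the
terms q n_x·n_xt cancel by the symmetry of second derivatives, leaving
2 n_t·(n_tt - (q n_x)_x) + q_t |n_x|². Writing the right-hand side of the wave equation as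
(μ - ζᵢ |n_x|²) nᵢ, the first term becomes 2 μ n·n_t - 2 |n_x|² Σᵢ ζᵢ nᵢ ∂_t nᵢ. Here n·n_t = 0
because |n| = 1, and 2 Σᵢ ζᵢ nᵢ ∂_t nᵢ = q_t, so the rest cancels q_t |n_x|². -/

/-- Partial derivative in the first (time) variable of a curried function. -/
noncomputable def ptd (f : ℝ → ℝ → ℝ) (t x : ℝ) : ℝ := deriv (fun τ => f τ x) t

/-- Partial derivative in the second (space) variable of a curried function. -/
noncomputable def pxd (f : ℝ → ℝ → ℝ) (t x : ℝ) : ℝ := deriv (fun y => f t y) x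

open Function

lemma fderiv_fderiv_apply {𝕜 E F : Type*} [NontriviallyNormedField 𝕜] [NormedAddCommGroup E]
    [NormedSpace 𝕜 E] [NormedAddCommGroup F] [NormedSpace 𝕜 F] {f : E → F} {p : E}
    (hf : DifferentiableAt 𝕜 (fderiv 𝕜 f) p) (v w : E) :
    fderiv 𝕜 (fun q => fderiv 𝕜 f q v) p w = fderiv 𝕜 (fderiv 𝕜 f) p w v := by
  rw [fderiv_clm_apply hf (differentiableAt_const v)]
  simp

section PartialDerivatives

variable {f : ℝ → ℝ → ℝ} {t x : ℝ}

lemma hasDerivAt_fderiv_apply_one_zero (hf : DifferentiableAt ℝ (uncurry f) (t, x)) :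
    HasDerivAt (fun τ => f τ x) (fderiv ℝ (uncurry f) (t, x) (1, 0)) t :=
  hf.hasFDerivAt.comp_hasDerivAt (f := fun τ => (τ, x)) t
    ((hasDerivAt_id t).prodMk (hasDerivAt_const t x))

lemma hasDerivAt_fderiv_apply_zero_one (hf : DifferentiableAt ℝ (uncurry f) (t, x)) :
    HasDerivAt (fun y => f t y) (fderiv ℝ (uncurry f) (t, x) (0, 1)) x :=
  hf.hasFDerivAt.comp_hasDerivAt (f := fun y => (t, y)) x
    ((hasDerivAt_const x t).prodMk (hasDerivAt_id x))

lemma ptd_eq_of_hasDerivAt {a : ℝ} (h : HasDerivAt (fun τ => f τ x) a t) : ptd f t x = a :=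
  h.deriv

lemma pxd_eq_of_hasDerivAt {a : ℝ} (h : HasDerivAt (fun y => f t y) a x) : pxd f t x = a :=
  h.deriv

lemma ptd_const_mul (a : ℝ) :
    ptd (fun t x => a * f t x) t x = a * ptd f t x :=
  deriv_const_mul_field a

lemma pxd_const_mul (a : ℝ) :
    pxd (fun t x => a * f t x) t x = a * pxd f t x :=
  deriv_const_mul_field a

lemma ptd_eq_fderiv (hf : DifferentiableAt ℝ (uncurry f) (t, x)) :
    ptd f t x = fderiv ℝ (uncurry f) (t, x) (1, 0) :=
  ptd_eq_of_hasDerivAt (hasDerivAt_fderiv_apply_one_zero hf)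

lemma pxd_eq_fderiv (hf : DifferentiableAt ℝ (uncurry f) (t, x)) :
    pxd f t x = fderiv ℝ (uncurry f) (t, x) (0, 1) :=
  pxd_eq_of_hasDerivAt (hasDerivAt_fderiv_apply_zero_one hf)

lemma hasDerivAt_ptd (hf : DifferentiableAt ℝ (uncurry f) (t, x)) :
    HasDerivAt (fun τ => f τ x) (ptd f t x) t :=
  ptd_eq_fderiv hf ▸ hasDerivAt_fderiv_apply_one_zero hf

lemma hasDerivAt_pxd (hf : DifferentiableAt ℝ (uncurry f) (t, x)) :
    HasDerivAt (fun y => f t y) (pxd f t x) x :=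
  pxd_eq_fderiv hf ▸ hasDerivAt_fderiv_apply_zero_one hf

lemma uncurry_ptd (hf : Differentiable ℝ (uncurry f)) :
    uncurry (ptd f) = fun p => fderiv ℝ (uncurry f) p (1, 0) :=
  funext fun p => ptd_eq_fderiv (hf p)

lemma uncurry_pxd (hf : Differentiable ℝ (uncurry f)) :
    uncurry (pxd f) = fun p => fderiv ℝ (uncurry f) p (0, 1) :=
  funext fun p => pxd_eq_fderiv (hf p)

lemma ContDiff.uncurry_ptd {k : WithTop ℕ∞} (hf : ContDiff ℝ (k + 1) (uncurry f)) :
    ContDiff ℝ k (uncurry (ptd f)) := by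
  rw [_root_.uncurry_ptd (hf.differentiable (by simp))]
  exact (hf.fderiv_right le_rfl).clm_apply contDiff_const

lemma ContDiff.uncurry_pxd {k : WithTop ℕ∞} (hf : ContDiff ℝ (k + 1) (uncurry f)) :
    ContDiff ℝ k (uncurry (pxd f)) := by
  rw [_root_.uncurry_pxd (hf.differentiable (by simp))]
  exact (hf.fderiv_right le_rfl).clm_apply contDiff_const

lemma pxd_ptd (hf : ContDiff ℝ 2 (uncurry f)) :
    pxd (ptd f) t x = ptd (pxd f) t x := by
  have hdt := (hf.uncurry_ptd (k := 1)).differentiable one_ne_zero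
  have hdx := (hf.uncurry_pxd (k := 1)).differentiable one_ne_zero
  have hd := hf.differentiable two_ne_zero
  have hd2 := (hf.fderiv_right (m := 1) le_rfl).differentiable one_ne_zero
  rw [pxd_eq_fderiv (hdt _), ptd_eq_fderiv (hdx _), uncurry_ptd hd, uncurry_pxd hd,
    fderiv_fderiv_apply (hd2 _), fderiv_fderiv_apply (hd2 _)]
  exact (hf.contDiffAt.isSymmSndFDerivAt (by simp)) _ _

end PartialDerivatives

section SumOfSquares

variable {ι : Type*} [Fintype ι] {f : ι → ℝ → ℝ → ℝ} {t x : ℝ}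

lemma hasDerivAt_sum_sq_ptd (hf : ∀ j, DifferentiableAt ℝ (uncurry (f j)) (t, x)) :
    HasDerivAt (fun τ => ∑ j, f j τ x ^ 2) (∑ j, 2 * f j t x * ptd (f j) t x) t :=
  HasDerivAt.fun_sum fun j _ => ((hasDerivAt_ptd (hf j)).fun_pow 2).congr_deriv (by ring)

lemma sum_mul_ptd_eq_zero (hf : ∀ j, DifferentiableAt ℝ (uncurry (f j)) (t, x))
    (hunit : ∀ τ, ∑ j, f j τ x ^ 2 = 1) : ∑ j, f j t x * ptd (f j) t x = 0 := by
  have hconst : HasDerivAt (fun τ => ∑ j, f j τ x ^ 2) 0 t := by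
    simpa only [hunit] using hasDerivAt_const t (1 : ℝ)
  simpa [mul_assoc, ← Finset.mul_sum] using (hasDerivAt_sum_sq_ptd hf).unique hconst

end SumOfSquares

theorem ptd_energy_eq_pxd_flux {ι : Type*} [Fintype ι] (n : ι → ℝ → ℝ → ℝ)
    (hn : ∀ i, ContDiff ℝ 2 (uncurry (n i))) (hunit : ∀ t x, ∑ j, n j t x ^ 2 = 1)
    (ζ : ι → ℝ) (q μ : ℝ → ℝ → ℝ) (hq : ∀ t x, q t x = ∑ j, ζ j * n j t x ^ 2)
    (hwave : ∀ i t x, ptd (ptd (n i)) t x - pxd (fun t x => q t x * pxd (n i) t x) t x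
      = (μ t x - ζ i * ∑ j, pxd (n j) t x ^ 2) * n i t x) (t x : ℝ) :
    ptd (fun t x => ∑ j, ptd (n j) t x ^ 2 + q t x * ∑ j, pxd (n j) t x ^ 2) t x
      = pxd (fun t x => 2 * q t x * ∑ j, ptd (n j) t x * pxd (n j) t x) t x := by
  have hdn : ∀ j, Differentiable ℝ (uncurry (n j)) := fun j => (hn j).differentiable two_ne_zero
  have hdnt : ∀ j, Differentiable ℝ (uncurry (ptd (n j))) :=
    fun j => ((hn j).uncurry_ptd (k := 1)).differentiable one_ne_zero
  have hdnx : ∀ j, Differentiable ℝ (uncurry (pxd (n j))) :=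
    fun j => ((hn j).uncurry_pxd (k := 1)).differentiable one_ne_zero
  have hdq : Differentiable ℝ (uncurry q) := by
    have : uncurry q = fun p => ∑ j, ζ j * uncurry (n j) p ^ 2 := funext fun p => hq p.1 p.2
    rw [this]
    exact Differentiable.fun_sum fun j _ => ((hdn j).pow 2).const_mul (ζ j)
  have horth : ∑ j, n j t x * ptd (n j) t x = 0 :=
    sum_mul_ptd_eq_zero (fun j => hdn j _) fun τ => hunit τ x
  have hqt : HasDerivAt (fun τ => q τ x) (∑ j, ζ j * (2 * n j t x * ptd (n j) t x)) t := by
    simp only [hq]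
    exact HasDerivAt.fun_sum fun j _ =>
      (((hasDerivAt_ptd (hdn j _)).fun_pow 2).const_mul (ζ j)).congr_deriv (by ring)
  have hqx : HasDerivAt (fun y => q t y) (pxd q t x) x := hasDerivAt_pxd (hdq _)
  have hmixed : ∀ j, pxd (ptd (n j)) t x = ptd (pxd (n j)) t x := fun j => pxd_ptd (hn j)
  have hE : HasDerivAt (fun τ => ∑ j, ptd (n j) τ x ^ 2 + q τ x * ∑ j, pxd (n j) τ x ^ 2)
      (∑ j, 2 * ptd (n j) t x * ptd (ptd (n j)) t x
        + ((∑ j, ζ j * (2 * n j t x * ptd (n j) t x)) * ∑ j, pxd (n j) t x ^ 2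
          + q t x * ∑ j, 2 * pxd (n j) t x * ptd (pxd (n j)) t x)) t :=
    (hasDerivAt_sum_sq_ptd fun j => hdnt j _).add
      (hqt.mul (hasDerivAt_sum_sq_ptd fun j => hdnx j _))
  have hF : HasDerivAt (fun y => 2 * q t y * ∑ j, ptd (n j) t y * pxd (n j) t y)
      (2 * pxd q t x * ∑ j, ptd (n j) t x * pxd (n j) t x
        + 2 * q t x * ∑ j, (pxd (ptd (n j)) t x * pxd (n j) t x
          + ptd (n j) t x * pxd (pxd (n j)) t x)) x :=
    ((hqx.const_mul 2).mul (HasDerivAt.fun_sum fun j _ =>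
      (hasDerivAt_pxd (hdnt j _)).fun_mul (hasDerivAt_pxd (hdnx j _)))).congr_deriv (by ring)
  have hflux : ∀ i, pxd (fun t x => q t x * pxd (n i) t x) t x
      = pxd q t x * pxd (n i) t x + q t x * pxd (pxd (n i)) t x :=
    fun i => pxd_eq_of_hasDerivAt (hqx.fun_mul (hasDerivAt_pxd (hdnx i _)))
  rw [ptd_eq_of_hasDerivAt hE, pxd_eq_of_hasDerivAt hF, ← sub_eq_zero, ← mul_zero (2 * μ t x),
    ← horth]
  -- keep |n_x|² opaque, so that the sums below are split over `j` only
  set X := ∑ j, pxd (n j) t x ^ 2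
  simp only [Finset.mul_sum, Finset.sum_mul, ← Finset.sum_add_distrib, ← Finset.sum_sub_distrib]
  refine Finset.sum_congr rfl fun j _ => ?_
  rw [hmixed j]
  linear_combination (2 * ptd (n j) t x) * (hwave j t x + hflux j)

theorem stmt5_general (α γ : ℝ)
    (n : Fin 3 → ℝ → ℝ → ℝ)
    (hsm : ∀ i, ContDiff ℝ 2 (Function.uncurry (n i)))
    (hunit : ∀ t x, ∑ j, (n j t x) ^ 2 = 1)
    (c : ℝ → ℝ) (hc : c = fun s => Real.sqrt (α + (γ - α) * s ^ 2))
    (hpos : ∀ t x, 0 < α + (γ - α) * (n 0 t x) ^ 2)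
    (ζ : Fin 3 → ℝ) (hζ0 : ζ 0 = γ) (hζ1 : ζ 1 = α) (hζ2 : ζ 2 = α)
    (hwave : ∀ i t x,
      ptd (fun t x => ptd (n i) t x) t x
        - pxd (fun t x => (c (n 0 t x)) ^ 2 * pxd (n i) t x) t x
      = (-(∑ j, (ptd (n j) t x) ^ 2)
          + (2 * (c (n 0 t x)) ^ 2 - ζ i) * (∑ j, (pxd (n j) t x) ^ 2)) * n i t x)
    (R S : Fin 3 → ℝ → ℝ → ℝ)
    (hR : ∀ i t x, R i t x = ptd (n i) t x + c (n 0 t x) * pxd (n i) t x)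
    (hS : ∀ i t x, S i t x = ptd (n i) t x - c (n 0 t x) * pxd (n i) t x) :
    ∀ t x,
      ptd (fun t x => (∑ j, (R j t x) ^ 2) + (∑ j, (S j t x) ^ 2)) t x
        - pxd (fun t x =>
            c (n 0 t x) * ((∑ j, (R j t x) ^ 2) - (∑ j, (S j t x) ^ 2))) t x = 0 := by
  intro t x
  have hcsq : ∀ t x, c (n 0 t x) ^ 2 = ∑ j, ζ j * n j t x ^ 2 := by
    intro t x
    have hunit3 := hunit t x
    rw [Fin.sum_univ_three] at hunit3
    simp only [hc, Real.sq_sqrt (hpos t x).le, Fin.sum_univ_three, hζ0, hζ1, hζ2]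
    linear_combination (-α) * hunit3
  have henergy : (fun t x => ∑ j, R j t x ^ 2 + ∑ j, S j t x ^ 2) = fun t x =>
      2 * (∑ j, ptd (n j) t x ^ 2 + c (n 0 t x) ^ 2 * ∑ j, pxd (n j) t x ^ 2) := by
    funext t x
    simp only [hR, hS, Fin.sum_univ_three]
    ring
  have hflux : (fun t x => c (n 0 t x) * (∑ j, R j t x ^ 2 - ∑ j, S j t x ^ 2)) = fun t x =>
      2 * (2 * c (n 0 t x) ^ 2 * ∑ j, ptd (n j) t x * pxd (n j) t x) := by
    funext t x
    simp only [hR, hS, Fin.sum_univ_three]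
    ring
  have hconservation := ptd_energy_eq_pxd_flux n hsm hunit ζ (fun t x => c (n 0 t x) ^ 2)
    (fun t x => -(∑ j, ptd (n j) t x ^ 2) + 2 * c (n 0 t x) ^ 2 * ∑ j, pxd (n j) t x ^ 2)
    hcsq (fun i t x => (hwave i t x).trans (by ring)) t x
  rw [henergy, hflux, ptd_const_mul, pxd_const_mul, hconservation, sub_self]

/-- Energy conservation law: for smooth solutions of the liquid-crystal
variational wave system, with R = n_t + c n_x and S = n_t − c n_x,
∂_t(|R|² + |S|²) − ∂_x(c(n₁)(|R|² − |S|²)) = 0 pointwise. -/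
theorem stmt5 (α γ : ℝ) (hα : 0 < α) (hγ : 0 < γ)
    (n : Fin 3 → ℝ → ℝ → ℝ)
    (hsm : ∀ i, ContDiff ℝ 2 (Function.uncurry (n i)))
    (hunit : ∀ t x, ∑ j, (n j t x) ^ 2 = 1)
    (c : ℝ → ℝ) (hc : c = fun s => Real.sqrt (α + (γ - α) * s ^ 2))
    (hpos : ∀ t x, 0 < α + (γ - α) * (n 0 t x) ^ 2)
    (ζ : Fin 3 → ℝ) (hζ0 : ζ 0 = γ) (hζ1 : ζ 1 = α) (hζ2 : ζ 2 = α)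
    (hwave : ∀ i t x,
      ptd (fun t x => ptd (n i) t x) t x
        - pxd (fun t x => (c (n 0 t x)) ^ 2 * pxd (n i) t x) t x
      = (-(∑ j, (ptd (n j) t x) ^ 2)
          + (2 * (c (n 0 t x)) ^ 2 - ζ i) * (∑ j, (pxd (n j) t x) ^ 2)) * n i t x)
    (R S : Fin 3 → ℝ → ℝ → ℝ)
    (hR : ∀ i t x, R i t x = ptd (n i) t x + c (n 0 t x) * pxd (n i) t x)
    (hS : ∀ i t x, S i t x = ptd (n i) t x - c (n 0 t x) * pxd (n i) t x) :
    ∀ t x,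
      ptd (fun t x => (∑ j, (R j t x) ^ 2) + (∑ j, (S j t x) ^ 2)) t x
        - pxd (fun t x =>
            c (n 0 t x) * ((∑ j, (R j t x) ^ 2) - (∑ j, (S j t x) ^ 2))) t x = 0 :=
  stmt5_general α γ n hsm hunit c hc hpos ζ hζ0 hζ1 hζ2 hwave R S hR hS
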